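/- arXiv:math/9404208 — 4 statements merged into one kernel-verified Lean document; each statement's English description precedes it below -/
import Mathlib

section
/- Let X be a Banach space, s ∈ ℝ, and x_1,...,x_n ∈ X. Then (1/π ∫_{-π}^{π} ‖Σ_{k=1}^n x_k cos(ks) cos(kt)‖² dt)^{1/2} ≤ (1/π ∫_{-π}^{π} ‖Σ_{k=1}^n x_k cos(kt)‖² dt)^{1/2}. -/
/-!
By `2 cos ks cos kt = cos k(t + s) + cos k(t - s)`, the function
`t ↦ ∑ cos ks cos kt • x_k` is the midpoint of the two translates `g(t + s)` and `g(t - s)` of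
`g(t) = ∑ cos kt • x_k`. Pointwise `‖(a + b) / 2‖² ≤ (‖a‖² + ‖b‖²) / 2`, and since `g` is
`2π`-periodic, integrating a translate of `‖g‖²` over `[-π, π]` gives the integral of `‖g‖²`.
-/

open Real Function

section

variable {E : Type*} [NormedAddCommGroup E] [NormedSpace ℝ E]

theorem norm_midpoint_sq_le (a b : E) :
    ‖(2 : ℝ)⁻¹ • (a + b)‖ ^ 2 ≤ (‖a‖ ^ 2 + ‖b‖ ^ 2) / 2 := by
  have h : ‖(2 : ℝ)⁻¹ • (a + b)‖ ≤ (‖a‖ + ‖b‖) / 2 := by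
    rw [norm_smul, norm_inv, Real.norm_two, inv_mul_eq_div]
    gcongr
    exact norm_add_le a b
  nlinarith [norm_nonneg ((2 : ℝ)⁻¹ • (a + b)), sq_nonneg (‖a‖ - ‖b‖)]

theorem Function.Periodic.intervalIntegral_comp_add_right {f : ℝ → E} {a b : ℝ}
    (hf : Periodic f (b - a)) (c : ℝ) :
    ∫ t in a..b, f (t + c) = ∫ t in a..b, f t := by
  rw [intervalIntegral.integral_comp_add_right]
  have h := hf.intervalIntegral_add_eq (a + c) a
  rwa [add_right_comm, add_sub_cancel] at h

end

section

variable {X : Type*} [NormedAddCommGroup X] [NormedSpace ℝ X]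

noncomputable def cosPoly (x : ℕ → X) (n : ℕ) (t : ℝ) : X :=
  ∑ k ∈ Finset.Icc 1 n, cos (k * t) • x k

variable (x : ℕ → X) (n : ℕ)

theorem continuous_cosPoly : Continuous (cosPoly x n) :=
  continuous_finsetSum _ fun _ _ => (continuous_cos.comp (continuous_const_mul _)).smul
    continuous_const

theorem cosPoly_periodic : Periodic (cosPoly x n) (2 * π) := by
  intro t
  refine Finset.sum_congr rfl fun k _ => ?_
  rw [mul_add, cos_add_nat_mul_two_pi]

theorem sum_cos_mul_cos_smul_eq (s t : ℝ) :
    ∑ k ∈ Finset.Icc 1 n, (cos (k * s) * cos (k * t)) • x k =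
      (2 : ℝ)⁻¹ • (cosPoly x n (t + s) + cosPoly x n (t - s)) := by
  simp only [cosPoly, ← Finset.sum_add_distrib, Finset.smul_sum, ← add_smul, smul_smul]
  refine Finset.sum_congr rfl fun k _ => ?_
  rw [mul_add (k : ℝ), mul_sub (k : ℝ), cos_add, cos_sub]
  congr 1
  ring

theorem integral_norm_sq_sum_cos_mul_cos_le (s : ℝ) :
    ∫ t in (-π)..π, ‖∑ k ∈ Finset.Icc 1 n, (cos (k * s) * cos (k * t)) • x k‖ ^ 2 ≤
      ∫ t in (-π)..π, ‖cosPoly x n t‖ ^ 2 := by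
  set G : ℝ → ℝ := fun t => ‖cosPoly x n t‖ ^ 2
  have hG : Continuous G := (continuous_cosPoly x n).norm.pow 2
  have hGper : Periodic G (π - -π) := by
    rw [sub_neg_eq_add, ← two_mul]
    exact (cosPoly_periodic x n).comp fun v => ‖v‖ ^ 2
  have hGs : Continuous fun t => G (t + s) := hG.comp (continuous_add_const s)
  have hGs' : Continuous fun t => G (t + -s) := hG.comp (continuous_add_const (-s))
  simp_rw [sum_cos_mul_cos_smul_eq, sub_eq_add_neg]
  calc ∫ t in (-π)..π, ‖(2 : ℝ)⁻¹ • (cosPoly x n (t + s) + cosPoly x n (t + -s))‖ ^ 2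
      ≤ ∫ t in (-π)..π, (G (t + s) + G (t + -s)) / 2 := by
        refine intervalIntegral.integral_mono_on (by linarith [pi_pos]) ?_ ?_
          fun t _ => norm_midpoint_sq_le _ _
        · exact (((continuous_cosPoly x n).comp (continuous_add_const s)).add
            ((continuous_cosPoly x n).comp (continuous_add_const (-s)))).const_smul _
            |>.norm.pow 2 |>.intervalIntegrable _ _
        · exact ((hGs.add hGs').div_const 2).intervalIntegrable _ _
    _ = ((∫ t in (-π)..π, G (t + s)) + ∫ t in (-π)..π, G (t + -s)) / 2 := by
        rw [intervalIntegral.integral_div,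
          intervalIntegral.integral_add (hGs.intervalIntegrable _ _) (hGs'.intervalIntegrable _ _)]
    _ = ∫ t in (-π)..π, G t := by
        rw [hGper.intervalIntegral_comp_add_right, hGper.intervalIntegral_comp_add_right]
        ring

end

/-- Lemma 2, first inequality: `‖(x_k cos ks)|𝒞_n‖ ≤ ‖(x_k)|𝒞_n‖`. -/
theorem stmt2 {X : Type*} [NormedAddCommGroup X] [NormedSpace ℝ X]
    {n : ℕ} (s : ℝ) (x : ℕ → X) :
    Real.sqrt ((1 / π) * ∫ t in (-π)..π,
        ‖∑ k ∈ Finset.Icc 1 n, (Real.cos (k * s) * Real.cos (k * t)) • x k‖ ^ 2) ≤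
      Real.sqrt ((1 / π) * ∫ t in (-π)..π,
        ‖∑ k ∈ Finset.Icc 1 n, Real.cos (k * t) • x k‖ ^ 2) :=
  Real.sqrt_le_sqrt <| mul_le_mul_of_nonneg_left (integral_norm_sq_sum_cos_mul_cos_le x n s)
    (by positivity)
end

section
/- Let X be a Banach space and x_1,...,x_n ∈ X. Then (1/π² ∫_{-π}^{π}∫_{-π}^{π} ‖Σ_{k=1}^n x_k sin(ks) sin(kt)‖² dt ds) ≤ 2 · (1/π ∫_{-π}^{π} ‖Σ_{k=1}^n x_k cos(kt)‖² dt). -/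
/-!
Since `cos (k(s - t)) - cos (k(s + t)) = 2 sin (ks) sin (kt)`, the sine-sine sum at `(s, t)` is half
the difference of the cosine sum `F` at `s - t` and at `s + t`, so its squared norm is at most
`(‖F (s - t)‖² + ‖F (s + t)‖²) / 2`. By `2π`-periodicity of `F`, integrating in `t` over a period
turns both terms into `∫ ‖F‖²`; integrating the resulting bound in `s` gives the factor `2π`.
-/

open Real intervalIntegral Finset

theorem norm_sub_sq_le_two_mul {E : Type*} [SeminormedAddGroup E] (a b : E) :
    ‖a - b‖ ^ 2 ≤ 2 * (‖a‖ ^ 2 + ‖b‖ ^ 2) :=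
  (pow_le_pow_left₀ (norm_nonneg _) (norm_sub_le a b) 2).trans add_sq_le

namespace Function.Periodic

variable {E : Type*} [NormedAddCommGroup E] [NormedSpace ℝ E] {g : ℝ → E} {T : ℝ}

theorem intervalIntegral_comp_add_left_eq (hg : Periodic g T) (s a : ℝ) :
    ∫ t in a..a + T, g (s + t) = ∫ t in a..a + T, g t := by
  rw [integral_comp_add_left, ← add_assoc]
  exact hg.intervalIntegral_add_eq _ _

theorem intervalIntegral_comp_sub_left_eq (hg : Periodic g T) (s a : ℝ) :
    ∫ t in a..a + T, g (s - t) = ∫ t in a..a + T, g t := by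
  rw [integral_comp_sub_left, show s - a = s - (a + T) + T by ring]
  exact hg.intervalIntegral_add_eq _ _

end Function.Periodic

section TrigSums

variable {X : Type*} [NormedAddCommGroup X] [NormedSpace ℝ X] (I : Finset ℕ) (x : ℕ → X)

noncomputable def cosSum (t : ℝ) : X := ∑ k ∈ I, cos (k * t) • x k

noncomputable def sinSinSum (s t : ℝ) : X := ∑ k ∈ I, (sin (k * s) * sin (k * t)) • x k

@[fun_prop]
theorem continuous_cosSum : Continuous (cosSum I x) := by
  unfold cosSum; fun_prop

@[fun_prop]
theorem continuous_sinSinSum : Continuous (Function.uncurry (sinSinSum I x)) := by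
  unfold sinSinSum; fun_prop

theorem periodic_cosSum : Function.Periodic (cosSum I x) (2 * π) := fun t => by
  simp only [cosSum, mul_add, cos_add_nat_mul_two_pi]

theorem cosSum_sub_sub_cosSum_add (s t : ℝ) :
    cosSum I x (s - t) - cosSum I x (s + t) = (2 : ℝ) • sinSinSum I x s t := by
  simp only [cosSum, sinSinSum, smul_sum, ← sum_sub_distrib, ← sub_smul, smul_smul, mul_sub,
    mul_add, cos_sub, cos_add]
  congr! 2
  ring

theorem norm_sinSinSum_sq_le (s t : ℝ) :
    ‖sinSinSum I x s t‖ ^ 2 ≤ (‖cosSum I x (s - t)‖ ^ 2 + ‖cosSum I x (s + t)‖ ^ 2) / 2 := by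
  have h := norm_sub_sq_le_two_mul (cosSum I x (s - t)) (cosSum I x (s + t))
  rw [cosSum_sub_sub_cosSum_add, norm_smul, Real.norm_two, mul_pow] at h
  linarith

theorem integral_norm_sinSinSum_sq_le (s : ℝ) :
    ∫ t in (-π)..π, ‖sinSinSum I x s t‖ ^ 2 ≤ ∫ t in (-π)..π, ‖cosSum I x t‖ ^ 2 := by
  set g : ℝ → ℝ := fun t => ‖cosSum I x t‖ ^ 2
  have hg : Function.Periodic g (2 * π) := fun t => by simp only [g, periodic_cosSum I x t]
  have hgc : Continuous g := by fun_prop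
  have hπ : -π + 2 * π = π := by ring
  have hsub := hg.intervalIntegral_comp_sub_left_eq s (-π)
  have hadd := hg.intervalIntegral_comp_add_left_eq s (-π)
  rw [hπ] at hsub hadd
  calc ∫ t in (-π)..π, ‖sinSinSum I x s t‖ ^ 2
      ≤ ∫ t in (-π)..π, (g (s - t) + g (s + t)) / 2 := by
        refine integral_mono_on (by linarith [pi_pos]) ?_ ?_ fun t _ => norm_sinSinSum_sq_le I x s t
        all_goals exact Continuous.intervalIntegrable (by fun_prop) _ _
    _ = ((∫ t in (-π)..π, g (s - t)) + ∫ t in (-π)..π, g (s + t)) / 2 := by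
        rw [integral_div, integral_add] <;> exact Continuous.intervalIntegrable (by fun_prop) _ _
    _ = ∫ t in (-π)..π, g t := by
        rw [hsub, hadd]
        ring

end TrigSums

/-- Lemma 3 (integrated form): `‖(x_k)|𝒮_n⊗𝒮_n‖² ≤ 2 ‖(x_k)|𝒞_n‖²`. -/
theorem stmt5 {X : Type*} [NormedAddCommGroup X] [NormedSpace ℝ X]
    {n : ℕ} (x : ℕ → X) :
    (1 / π ^ 2) * ∫ s in (-π)..π, ∫ t in (-π)..π,
        ‖∑ k ∈ Finset.Icc 1 n, (Real.sin (k * s) * Real.sin (k * t)) • x k‖ ^ 2 ≤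
      2 * ((1 / π) * ∫ t in (-π)..π,
        ‖∑ k ∈ Finset.Icc 1 n, Real.cos (k * t) • x k‖ ^ 2) := by
  set C := ∫ t in (-π)..π, ‖cosSum (Icc 1 n) x t‖ ^ 2
  have hinner_cont : Continuous fun s => ∫ t in (-π)..π, ‖sinSinSum (Icc 1 n) x s t‖ ^ 2 :=
    continuous_parametric_intervalIntegral_of_continuous' (by fun_prop) _ _
  have houter : ∫ s in (-π)..π, ∫ t in (-π)..π, ‖sinSinSum (Icc 1 n) x s t‖ ^ 2 ≤ 2 * π * C := by
    calc _ ≤ ∫ _ in (-π)..π, C :=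
          integral_mono_on (by linarith [pi_pos]) (hinner_cont.intervalIntegrable _ _)
            intervalIntegrable_const fun s _ => integral_norm_sinSinSum_sq_le _ x s
      _ = 2 * π * C := by simp only [integral_const, smul_eq_mul]; ring
  calc (1 / π ^ 2) * ∫ s in (-π)..π, ∫ t in (-π)..π, ‖sinSinSum (Icc 1 n) x s t‖ ^ 2
      ≤ (1 / π ^ 2) * (2 * π * C) := by gcongr
    _ = 2 * ((1 / π) * C) := by field_simp
end

section
/- Let X, Y be Banach spaces, T : X → Y a bounded linear operator, and c ≥ 0 a constant such that ‖(T y_k)|S_n‖ ≤ c ‖(y_k)|C_n‖ for all y_1,...,y_n ∈ X (where ‖(y_k)|S_n‖² = (2/π)∫_0^π ‖Σ y_k sin kt‖² dt and ‖(y_k)|C_n‖² = (2/π)∫_0^π ‖Σ y_k cos kt‖² dt). Then for all x_1,...,x_n ∈ X: (2/π ∫_{π/3}^{2π/3} ‖Σ_{k=1}^n T x_k cos(kt)‖² dt)^{1/2} ≤ 4c · ‖(x_k)|S_n‖. -/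
/-!
On `[π/3, 2π/3]` we have `2 sin t ≥ √3`, so it suffices to bound the `L²(0, π)` norm of
`2 sin t · Σ cos(kt) T x_k`. With `x₀ = x_{n+1} = 0`, summation by parts writes this as
`Σ sin(kt) T(x_{k-1} - x_{k+1}) + sin((n+1)t) T x_n`; the hypothesis bounds the first sum by `c`
times the cosine norm of the differences, which summation by parts in turn expresses through
`x₁`, `x_n` and `2 sin t · Σ sin(kt) x_k`. Each coefficient is at most `‖(x_k)|𝒮_n‖`
(orthogonality of the `sin(kt)` and Hahn–Banach), which gives the constant `(4 + √2)/√3 < 4`.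
-/

open Real MeasureTheory intervalIntegral

namespace TrigSum

variable {E : Type*} [NormedAddCommGroup E]

/-- The norm of `L²([a, b], (2/π) dt)`; `l2Norm 0 π (sinSum n x)` and `l2Norm 0 π (cosSum n x)`
are the paper's `‖(x_k)|𝒮_n‖` and `‖(x_k)|𝒞_n‖`. -/
noncomputable def l2Norm (a b : ℝ) (f : ℝ → E) : ℝ := √((2 / π) * ∫ t in a..b, ‖f t‖ ^ 2)

lemma l2Norm_nonneg (a b : ℝ) (f : ℝ → E) : 0 ≤ l2Norm a b f := Real.sqrt_nonneg _

lemma sq_l2Norm {a b : ℝ} (hab : a ≤ b) (f : ℝ → E) :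
    l2Norm a b f ^ 2 = (2 / π) * ∫ t in a..b, ‖f t‖ ^ 2 :=
  Real.sq_sqrt <| mul_nonneg (by positivity) (integral_nonneg hab fun _ _ ↦ by positivity)

lemma integral_norm_mul_norm_le_l2Norm_mul_l2Norm {a b : ℝ} (hab : a ≤ b) {f g : ℝ → E}
    (hf : Continuous f) (hg : Continuous g) :
    (2 / π) * ∫ t in a..b, ‖f t‖ * ‖g t‖ ≤ l2Norm a b f * l2Norm a b g := by
  have hf2 : MemLp f (ENNReal.ofReal 2) (volume.restrict (Set.Ioc a b)) := by
    rw [ENNReal.ofReal_ofNat, memLp_two_iff_integrable_sq_norm hf.aestronglyMeasurable]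
    exact (hf.norm.pow 2).integrableOn_Ioc
  have hg2 : MemLp g (ENNReal.ofReal 2) (volume.restrict (Set.Ioc a b)) := by
    rw [ENNReal.ofReal_ofNat, memLp_two_iff_integrable_sq_norm hg.aestronglyMeasurable]
    exact (hg.norm.pow 2).integrableOn_Ioc
  have holder := integral_mul_norm_le_Lp_mul_Lq Real.HolderConjugate.two_two hf2 hg2
  simp only [Real.rpow_two, ← Real.sqrt_eq_rpow, ← integral_of_le hab] at holder
  have h2π : (0 : ℝ) ≤ 2 / π := by positivity
  calc (2 / π) * ∫ t in a..b, ‖f t‖ * ‖g t‖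
      ≤ (2 / π) * (√(∫ t in a..b, ‖f t‖ ^ 2) * √(∫ t in a..b, ‖g t‖ ^ 2)) :=
        mul_le_mul_of_nonneg_left holder h2π
    _ = l2Norm a b f * l2Norm a b g := by
        simp only [l2Norm, Real.sqrt_mul h2π]
        rw [mul_mul_mul_comm, Real.mul_self_sqrt h2π]

lemma l2Norm_add_le {a b : ℝ} (hab : a ≤ b) {f g : ℝ → E} (hf : Continuous f) (hg : Continuous g) :
    l2Norm a b (f + g) ≤ l2Norm a b f + l2Norm a b g := by
  have h2π : (0 : ℝ) ≤ 2 / π := by positivity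
  have hnn : 0 ≤ l2Norm a b f + l2Norm a b g :=
    add_nonneg (l2Norm_nonneg a b f) (l2Norm_nonneg a b g)
  rw [← Real.sqrt_sq hnn, add_sq, sq_l2Norm hab, sq_l2Norm hab]
  refine Real.sqrt_le_sqrt ?_
  simp only [Pi.add_apply]
  calc (2 / π) * ∫ t in a..b, ‖f t + g t‖ ^ 2
      ≤ (2 / π) * ∫ t in a..b, ‖f t‖ ^ 2 + 2 * (‖f t‖ * ‖g t‖) + ‖g t‖ ^ 2 := by
        refine mul_le_mul_of_nonneg_left (integral_mono_on hab ?_ ?_ fun t _ ↦ ?_) h2π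
        · exact (Continuous.intervalIntegrable (by fun_prop) _ _)
        · exact (Continuous.intervalIntegrable (by fun_prop) _ _)
        · nlinarith [norm_add_le (f t) (g t), norm_nonneg (f t + g t)]
    _ = (2 / π) * (∫ t in a..b, ‖f t‖ ^ 2) + 2 * ((2 / π) * ∫ t in a..b, ‖f t‖ * ‖g t‖)
          + (2 / π) * ∫ t in a..b, ‖g t‖ ^ 2 := by
        rw [intervalIntegral.integral_add, intervalIntegral.integral_add,
          intervalIntegral.integral_const_mul]
        · ring
        all_goals exact Continuous.intervalIntegrable (by fun_prop) _ _
    _ ≤ _ := by linarith [integral_norm_mul_norm_le_l2Norm_mul_l2Norm hab hf hg]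

lemma l2Norm_le_mul_of_norm_le {F : Type*} [NormedAddCommGroup F] {a b K : ℝ} (hab : a ≤ b)
    (hK : 0 ≤ K) {f : ℝ → E} {g : ℝ → F}
    (hf : Continuous f) (hg : Continuous g) (hfg : ∀ t ∈ Set.Icc a b, ‖f t‖ ≤ K * ‖g t‖) :
    l2Norm a b f ≤ K * l2Norm a b g := by
  rw [← Real.sqrt_sq hK, l2Norm, l2Norm, ← Real.sqrt_mul (sq_nonneg K), mul_left_comm,
    ← intervalIntegral.integral_const_mul (K ^ 2)]
  refine Real.sqrt_le_sqrt (mul_le_mul_of_nonneg_left (integral_mono_on hab ?_ ?_ fun t ht ↦ ?_)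
    (by positivity))
  · exact Continuous.intervalIntegrable (by fun_prop) _ _
  · exact Continuous.intervalIntegrable (by fun_prop) _ _
  · rw [← mul_pow]; exact pow_le_pow_left₀ (norm_nonneg _) (hfg t ht) 2

lemma l2Norm_mono_interval {a b c d : ℝ} (hca : c ≤ a) (hab : a ≤ b) (hbd : b ≤ d) {f : ℝ → E}
    (hf : Continuous f) : l2Norm a b f ≤ l2Norm c d f :=
  Real.sqrt_le_sqrt <| mul_le_mul_of_nonneg_left (integral_mono_interval hca hab hbd
    (Filter.Eventually.of_forall fun _ ↦ by positivity)
    (Continuous.intervalIntegrable (by fun_prop) _ _))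
    (by positivity)

lemma l2Norm_smul_const [NormedSpace ℝ E] (a b : ℝ) (φ : ℝ → ℝ) (v : E) :
    l2Norm a b (fun t ↦ φ t • v) = l2Norm a b φ * ‖v‖ := by
  simp only [l2Norm, norm_smul, mul_pow, intervalIntegral.integral_mul_const, ← mul_assoc]
  rw [Real.sqrt_mul' _ (sq_nonneg _), Real.sqrt_sq (norm_nonneg v)]

lemma l2Norm_const (v : E) : l2Norm 0 π (fun _ ↦ v) = √2 * ‖v‖ := by
  simp only [l2Norm, intervalIntegral.integral_const, smul_eq_mul, sub_zero]
  rw [← mul_assoc, div_mul_cancel₀ _ Real.pi_ne_zero, Real.sqrt_mul' _ (sq_nonneg _),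
    Real.sqrt_sq (norm_nonneg v)]

lemma integral_cos_int_mul (j : ℤ) : ∫ t in (0)..π, cos (j * t) = if j = 0 then π else 0 := by
  split_ifs with hj
  · simp [hj]
  · rw [intervalIntegral.integral_comp_mul_left (fun t ↦ cos t) (Int.cast_ne_zero.2 hj)]
    simp [Real.sin_int_mul_pi]

lemma integral_sin_nat_mul_sin_nat_mul (m : ℕ) {k : ℕ} (hk : k ≠ 0) :
    (2 / π) * ∫ t in (0)..π, sin (m * t) * sin (k * t) = if m = k then 1 else 0 := by
  have hprod (t : ℝ) : sin (m * t) * sin (k * t) =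
      (cos (((m - k : ℤ) : ℝ) * t) - cos (((m + k : ℤ) : ℝ) * t)) / 2 := by
    push_cast; rw [sub_mul, add_mul, cos_sub, cos_add]; ring
  simp_rw [hprod]
  rw [intervalIntegral.integral_div, intervalIntegral.integral_sub
    (Continuous.intervalIntegrable (by fun_prop) _ _)
    (Continuous.intervalIntegrable (by fun_prop) _ _),
    integral_cos_int_mul, integral_cos_int_mul, if_neg (show (m + k : ℤ) ≠ 0 by omega)]
  by_cases hmk : m = k
  · rw [if_pos (by omega), if_pos hmk]
    field_simp
    ring
  · rw [if_neg (by omega), if_neg hmk]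
    simp

lemma l2Norm_sin_nat_mul {m : ℕ} (hm : m ≠ 0) : l2Norm 0 π (fun t ↦ sin (m * t)) = 1 := by
  simp only [l2Norm, Real.norm_eq_abs, sq_abs]
  simp only [sq]
  rw [integral_sin_nat_mul_sin_nat_mul m hm, if_pos rfl, Real.sqrt_one]

lemma l2Norm_cos_nat_mul {m : ℕ} (hm : m ≠ 0) : l2Norm 0 π (fun t ↦ cos (m * t)) = 1 := by
  have hsq (t : ℝ) : ‖cos (m * t)‖ ^ 2 = (1 + cos (((2 * m : ℤ) : ℝ) * t)) / 2 := by
    push_cast; rw [Real.norm_eq_abs, sq_abs, mul_assoc, cos_sq]; ring_nf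
  simp only [l2Norm, hsq]
  rw [intervalIntegral.integral_div, intervalIntegral.integral_add intervalIntegrable_const
    (Continuous.intervalIntegrable (by fun_prop) _ _), integral_cos_int_mul, if_neg (by omega)]
  field_simp [Real.pi_ne_zero]
  simp

variable [NormedSpace ℝ E]

noncomputable def sinSum (n : ℕ) (x : ℕ → E) (t : ℝ) : E :=
  ∑ k ∈ Finset.Icc 1 n, sin (k * t) • x k

noncomputable def cosSum (n : ℕ) (x : ℕ → E) (t : ℝ) : E :=
  ∑ k ∈ Finset.Icc 1 n, cos (k * t) • x k

@[fun_prop]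
lemma continuous_sinSum (n : ℕ) (x : ℕ → E) : Continuous (sinSum n x) := by
  unfold sinSum; fun_prop

@[fun_prop]
lemma continuous_cosSum (n : ℕ) (x : ℕ → E) : Continuous (cosSum n x) := by
  unfold cosSum; fun_prop

lemma sinSum_congr {n : ℕ} {x y : ℕ → E} (h : ∀ k ∈ Finset.Icc 1 n, x k = y k) :
    sinSum n x = sinSum n y :=
  funext fun _ ↦ Finset.sum_congr rfl fun k hk ↦ by rw [h k hk]

lemma cosSum_congr {n : ℕ} {x y : ℕ → E} (h : ∀ k ∈ Finset.Icc 1 n, x k = y k) :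
    cosSum n x = cosSum n y :=
  funext fun _ ↦ Finset.sum_congr rfl fun k hk ↦ by rw [h k hk]

lemma two_sin_smul_cosSum (n : ℕ) (x : ℕ → E) (t : ℝ) :
    (2 * sin t) • cosSum n x t = sinSum n (fun k ↦ x (k - 1) - x (k + 1)) t - sin t • x 0
      + sin ((n + 1 : ℕ) * t) • x n + sin (n * t) • x (n + 1) := by
  induction n with
  | zero => simp [sinSum, cosSum]
  | succ n ih =>
    simp only [sinSum, cosSum] at ih ⊢
    rw [Finset.sum_Icc_succ_top (by omega), Finset.sum_Icc_succ_top (by omega), smul_add, ih]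
    push_cast
    have h : 2 * sin t * cos ((n + 1) * t) = sin ((n + 1 + 1) * t) - sin (n * t) := by
      rw [show ((n : ℝ) + 1 + 1) * t = (n + 1) * t + t by ring,
        show (n : ℝ) * t = (n + 1) * t - t by ring, sin_add, sin_sub]
      ring
    rw [smul_smul, h]
    module

lemma norm_le_l2Norm_sinSum {n m : ℕ} (hm : m ∈ Finset.Icc 1 n) (x : ℕ → E) :
    ‖x m‖ ≤ l2Norm 0 π (sinSum n x) := by
  obtain ⟨φ, hφ, hφx⟩ := exists_dual_vector'' ℝ (x m)
  have hm0 : m ≠ 0 := by grind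
  have hcoeff : (2 / π) * ∫ t in (0)..π, sin (m * t) * φ (sinSum n x t) = φ (x m) := by
    simp only [sinSum, map_sum, map_smul, smul_eq_mul, Finset.mul_sum]
    rw [intervalIntegral.integral_finsetSum
      fun k _ ↦ Continuous.intervalIntegrable (by fun_prop) _ _,
      Finset.mul_sum]
    have hterm (k : ℕ) (hk : k ∈ Finset.Icc 1 n) :
        (2 / π) * ∫ t in (0)..π, sin (m * t) * (sin (k * t) * φ (x k)) =
          if m = k then φ (x k) else 0 := by
      simp_rw [← mul_assoc]
      rw [intervalIntegral.integral_mul_const, ← mul_assoc,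
        integral_sin_nat_mul_sin_nat_mul m (by grind), ite_mul, one_mul, zero_mul]
    rw [Finset.sum_congr rfl hterm, Finset.sum_ite_eq, if_pos hm]
  calc ‖x m‖ = (2 / π) * ∫ t in (0)..π, sin (m * t) * φ (sinSum n x t) := by rw [hcoeff, hφx]; rfl
    _ ≤ (2 / π) * ∫ t in (0)..π, ‖sin (m * t)‖ * ‖φ (sinSum n x t)‖ := by
        refine mul_le_mul_of_nonneg_left (integral_mono_on Real.pi_pos.le ?_ ?_ fun t _ ↦ ?_)
          (by positivity)
        · exact Continuous.intervalIntegrable (by fun_prop) _ _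
        · exact Continuous.intervalIntegrable (by fun_prop) _ _
        · rw [← norm_mul]; exact le_abs_self _
    _ ≤ l2Norm 0 π (fun t ↦ sin (m * t)) * l2Norm 0 π (fun t ↦ φ (sinSum n x t)) :=
        integral_norm_mul_norm_le_l2Norm_mul_l2Norm Real.pi_pos.le (by fun_prop) (by fun_prop)
    _ ≤ 1 * (1 * l2Norm 0 π (sinSum n x)) := by
        rw [l2Norm_sin_nat_mul hm0]
        refine mul_le_mul_of_nonneg_left (l2Norm_le_mul_of_norm_le Real.pi_pos.le zero_le_one
          (by fun_prop) (by fun_prop) fun t _ ↦ ?_) zero_le_one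
        exact (φ.le_opNorm _).trans (mul_le_mul_of_nonneg_right hφ (norm_nonneg _))
    _ = l2Norm 0 π (sinSum n x) := by ring

lemma two_sin_smul_sinSum (n : ℕ) (x : ℕ → E) (t : ℝ) :
    (2 * sin t) • sinSum n x t = x 1 + cos t • x 0 - cosSum n (fun k ↦ x (k - 1) - x (k + 1)) t
      - cos (n * t) • x (n + 1) - cos ((n + 1 : ℕ) * t) • x n := by
  induction n with
  | zero => simp [sinSum, cosSum]
  | succ n ih =>
    simp only [sinSum, cosSum] at ih ⊢
    rw [Finset.sum_Icc_succ_top (by omega), Finset.sum_Icc_succ_top (by omega), smul_add, ih]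
    push_cast
    have h : 2 * sin t * sin ((n + 1) * t) = cos (n * t) - cos ((n + 1 + 1) * t) := by
      rw [show ((n : ℝ) + 1 + 1) * t = (n + 1) * t + t by ring,
        show (n : ℝ) * t = (n + 1) * t - t by ring, cos_add, cos_sub]
      ring
    rw [smul_smul, h]
    module

lemma sinSum_single {n m : ℕ} (hm : m ∈ Finset.Icc 1 n) (v : E) (t : ℝ) :
    sinSum n (Pi.single m v) t = sin (m * t) • v := by
  rw [sinSum, Finset.sum_eq_single_of_mem m hm fun k _ hk ↦ by simp [hk], Pi.single_eq_same]

lemma cosSum_single {n m : ℕ} (hm : m ∈ Finset.Icc 1 n) (v : E) (t : ℝ) :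
    cosSum n (Pi.single m v) t = cos (m * t) • v := by
  rw [cosSum, Finset.sum_eq_single_of_mem m hm fun k _ hk ↦ by simp [hk], Pi.single_eq_same]

variable {F : Type*} [NormedAddCommGroup F] [NormedSpace ℝ F]

lemma norm_apply_le_of_l2Norm_sinSum_le (T : E →L[ℝ] F) {n : ℕ} (hn : 1 ≤ n) {c : ℝ}
    (h : ∀ y : ℕ → E, l2Norm 0 π (sinSum n fun k ↦ T (y k)) ≤ c * l2Norm 0 π (cosSum n y))
    (v : E) : ‖T v‖ ≤ c * ‖v‖ := by
  have h1 : 1 ∈ Finset.Icc 1 n := Finset.mem_Icc.2 ⟨le_rfl, hn⟩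
  have hT : (fun k ↦ T ((Pi.single 1 v : ℕ → E) k)) = Pi.single 1 (T v) :=
    funext <| Pi.apply_single (fun _ ↦ T) (fun _ ↦ T.map_zero) 1 v
  simpa only [hT, funext (sinSum_single h1 _), funext (cosSum_single h1 _), l2Norm_smul_const,
    l2Norm_sin_nat_mul one_ne_zero, l2Norm_cos_nat_mul one_ne_zero, one_mul]
    using h (Pi.single 1 v)

lemma l2Norm_cosSum_sub_le {n : ℕ} (hn : 1 ≤ n) {x : ℕ → E} (hx0 : x 0 = 0)
    (hxn : x (n + 1) = 0) :
    l2Norm 0 π (cosSum n fun k ↦ x (k - 1) - x (k + 1)) ≤ (√2 + 3) * l2Norm 0 π (sinSum n x) := by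
  set S := l2Norm 0 π (sinSum n x)
  have hid : cosSum n (fun k ↦ x (k - 1) - x (k + 1)) = (fun _ ↦ x 1) +
      ((fun t ↦ cos ((n + 1 : ℕ) * t) • -x n) + fun t ↦ (2 * sin t) • -sinSum n x t) := by
    funext t
    have := two_sin_smul_sinSum n x t
    simp only [hx0, hxn, smul_zero, sub_zero, add_zero] at this
    simp only [Pi.add_apply, smul_neg, this]
    abel
  have hx1_le : ‖x 1‖ ≤ S := norm_le_l2Norm_sinSum (Finset.mem_Icc.2 ⟨le_rfl, hn⟩) x
  have hxn_le : ‖x n‖ ≤ S := norm_le_l2Norm_sinSum (Finset.mem_Icc.2 ⟨hn, le_rfl⟩) x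
  have h2sin : l2Norm 0 π (fun t ↦ (2 * sin t) • -sinSum n x t) ≤ 2 * S :=
    l2Norm_le_mul_of_norm_le Real.pi_pos.le zero_le_two (by fun_prop) (by fun_prop) fun t _ ↦ by
      rw [norm_smul, norm_neg, Real.norm_eq_abs, abs_mul, abs_two]
      gcongr
      exact mul_le_of_le_one_right zero_le_two (abs_sin_le_one t)
  rw [hid]
  calc _ ≤ l2Norm 0 π (fun _ ↦ x 1) + (l2Norm 0 π (fun t ↦ cos ((n + 1 : ℕ) * t) • -x n)
        + l2Norm 0 π (fun t ↦ (2 * sin t) • -sinSum n x t)) :=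
        (l2Norm_add_le Real.pi_pos.le (by fun_prop) (by fun_prop)).trans
          (add_le_add_right (l2Norm_add_le Real.pi_pos.le (by fun_prop) (by fun_prop)) _)
    _ ≤ √2 * S + (S + 2 * S) := by
        rw [l2Norm_const, l2Norm_smul_const, l2Norm_cos_nat_mul n.succ_ne_zero, one_mul, norm_neg]
        gcongr
    _ = (√2 + 3) * S := by ring

lemma l2Norm_two_sin_smul_cosSum_le (T : E →L[ℝ] F) {n : ℕ} (hn : 1 ≤ n) {c : ℝ} (hc : 0 ≤ c)
    (h : ∀ y : ℕ → E, l2Norm 0 π (sinSum n fun k ↦ T (y k)) ≤ c * l2Norm 0 π (cosSum n y))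
    {x : ℕ → E} (hx0 : x 0 = 0) (hxn : x (n + 1) = 0) :
    l2Norm 0 π (fun t ↦ (2 * sin t) • cosSum n (fun k ↦ T (x k)) t) ≤
      c * (√2 + 4) * l2Norm 0 π (sinSum n x) := by
  set w : ℕ → E := fun k ↦ x (k - 1) - x (k + 1)
  have hid : (fun t ↦ (2 * sin t) • cosSum n (fun k ↦ T (x k)) t) =
      sinSum n (fun k ↦ T (w k)) + fun t ↦ sin ((n + 1 : ℕ) * t) • T (x n) := by
    funext t
    simp [two_sin_smul_cosSum, hx0, hxn, w]
  have hxn_le : ‖x n‖ ≤ l2Norm 0 π (sinSum n x) :=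
    norm_le_l2Norm_sinSum (Finset.mem_Icc.2 ⟨hn, le_rfl⟩) x
  rw [hid]
  calc _ ≤ l2Norm 0 π (sinSum n fun k ↦ T (w k)) + ‖T (x n)‖ := by
        refine (l2Norm_add_le Real.pi_pos.le (by fun_prop) (by fun_prop)).trans_eq ?_
        rw [l2Norm_smul_const, l2Norm_sin_nat_mul n.succ_ne_zero, one_mul]
    _ ≤ c * ((√2 + 3) * l2Norm 0 π (sinSum n x)) + c * l2Norm 0 π (sinSum n x) := by
        gcongr
        · exact (h w).trans (mul_le_mul_of_nonneg_left (l2Norm_cosSum_sub_le hn hx0 hxn) hc)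
        · exact (norm_apply_le_of_l2Norm_sinSum_le T hn h _).trans
            (mul_le_mul_of_nonneg_left hxn_le hc)
    _ = c * (√2 + 4) * l2Norm 0 π (sinSum n x) := by ring

lemma sqrt_three_le_two_mul_sin {t : ℝ} (h₁ : π / 3 ≤ t) (h₂ : t ≤ 2 * π / 3) :
    √3 ≤ 2 * sin t := by
  have : sin (π / 3) ≤ sin t := by
    rcases le_total t (π / 2) with ht | ht
    · exact sin_le_sin_of_le_of_le_pi_div_two (by linarith [pi_pos]) ht h₁
    · rw [← sin_pi_sub t]
      exact sin_le_sin_of_le_of_le_pi_div_two (by linarith [pi_pos]) (by linarith) (by linarith)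
  rw [sin_pi_div_three] at this
  linarith

lemma l2Norm_middle_third_le {g : ℝ → E} (hg : Continuous g) :
    l2Norm (π / 3) (2 * π / 3) g ≤ (√3)⁻¹ * l2Norm 0 π (fun t ↦ (2 * sin t) • g t) := by
  have hπ := pi_pos
  have h3 : 0 < √3 := by positivity
  calc l2Norm (π / 3) (2 * π / 3) g
      ≤ (√3)⁻¹ * l2Norm (π / 3) (2 * π / 3) (fun t ↦ (2 * sin t) • g t) :=
        l2Norm_le_mul_of_norm_le (by linarith) (by positivity) hg (by fun_prop) fun t ht ↦ by
          rw [norm_smul, Real.norm_eq_abs, le_inv_mul_iff₀ h3]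
          gcongr
          exact (sqrt_three_le_two_mul_sin ht.1 ht.2).trans (le_abs_self _)
    _ ≤ (√3)⁻¹ * l2Norm 0 π (fun t ↦ (2 * sin t) • g t) := by
        gcongr
        exact l2Norm_mono_interval (by linarith) (by linarith) (by linarith) (by fun_prop)

theorem l2Norm_cosSum_middle_third_le (T : E →L[ℝ] F) {n : ℕ} (hn : 1 ≤ n) {c : ℝ} (hc : 0 ≤ c)
    (h : ∀ y : ℕ → E, l2Norm 0 π (sinSum n fun k ↦ T (y k)) ≤ c * l2Norm 0 π (cosSum n y))
    {x : ℕ → E} (hx0 : x 0 = 0) (hxn : x (n + 1) = 0) :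
    l2Norm (π / 3) (2 * π / 3) (cosSum n fun k ↦ T (x k)) ≤ 4 * c * l2Norm 0 π (sinSum n x) := by
  have hconst : (√3)⁻¹ * (√2 + 4) ≤ 4 := by
    rw [inv_mul_le_iff₀ (by positivity)]
    nlinarith [Real.sqrt_le_sqrt (show (2 : ℝ) ≤ 2.25 by norm_num),
      Real.sqrt_le_sqrt (show (2.89 : ℝ) ≤ 3 by norm_num),
      Real.sqrt_sq (show (0 : ℝ) ≤ 1.5 by norm_num), Real.sqrt_sq (show (0 : ℝ) ≤ 1.7 by norm_num)]
  calc _ ≤ (√3)⁻¹ * l2Norm 0 π (fun t ↦ (2 * sin t) • cosSum n (fun k ↦ T (x k)) t) :=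
        l2Norm_middle_third_le (by fun_prop)
    _ ≤ (√3)⁻¹ * (c * (√2 + 4) * l2Norm 0 π (sinSum n x)) := by
        gcongr
        exact l2Norm_two_sin_smul_cosSum_le T hn hc h hx0 hxn
    _ = ((√3)⁻¹ * (√2 + 4)) * (c * l2Norm 0 π (sinSum n x)) := by ring
    _ ≤ 4 * (c * l2Norm 0 π (sinSum n x)) := by
        gcongr
        exact mul_nonneg hc (l2Norm_nonneg _ _ _)
    _ = 4 * c * l2Norm 0 π (sinSum n x) := by ring

end TrigSum

open TrigSum in
/-- Lemma 6: if `c` dominates `ϱ(T|𝒮_n,𝒞_n)`, then the `L₂`-norm of `Σ Tx_k cos kt`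
over the middle third `[π/3, 2π/3]` is at most `4 c ‖(x_k)|𝒮_n‖`. -/
theorem stmt9 {X Y : Type*} [NormedAddCommGroup X] [NormedSpace ℝ X]
    [NormedAddCommGroup Y] [NormedSpace ℝ Y]
    (T : X →L[ℝ] Y) {n : ℕ} (c : ℝ) (hc : 0 ≤ c)
    (h : ∀ y : ℕ → X,
      Real.sqrt ((2 / π) * ∫ t in (0 : ℝ)..π,
          ‖∑ k ∈ Finset.Icc 1 n, Real.sin (k * t) • T (y k)‖ ^ 2) ≤
        c * Real.sqrt ((2 / π) * ∫ t in (0 : ℝ)..π,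
          ‖∑ k ∈ Finset.Icc 1 n, Real.cos (k * t) • y k‖ ^ 2))
    (x : ℕ → X) :
    Real.sqrt ((2 / π) * ∫ t in (π / 3)..(2 * π / 3),
        ‖∑ k ∈ Finset.Icc 1 n, Real.cos (k * t) • T (x k)‖ ^ 2) ≤
      4 * c * Real.sqrt ((2 / π) * ∫ t in (0 : ℝ)..π,
        ‖∑ k ∈ Finset.Icc 1 n, Real.sin (k * t) • x k‖ ^ 2) := by
  rcases Nat.eq_zero_or_pos n with rfl | hn
  · simp
  let z : ℕ → X := fun k ↦ if k ∈ Finset.Icc 1 n then x k else 0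
  have hxz (k : ℕ) (hk : k ∈ Finset.Icc 1 n) : x k = z k := (if_pos hk).symm
  have key := l2Norm_cosSum_middle_third_le T hn hc h (x := z) (by simp [z]) (by simp [z])
  rwa [← sinSum_congr hxz, ← cosSum_congr fun k hk ↦ congrArg T (hxz k hk)] at key
end

section
/- Let X, Y be Banach spaces, T : X → Y bounded linear, A_n ⊂ L_2(M,μ) and B_n ⊂ L_2(N,ν) orthonormal systems. Then δ(T' | conj(A_n), conj(B_n)) ≤ δ(T | B_n, A_n), where T' : Y' → X' is the adjoint operator and conj(A_n) is the system of complex conjugates (ā_1,...,ā_n). Moreover equality holds: δ(T|B_n,A_n) = δ(T'|conj(A_n),conj(B_n)). -/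
/-!
Both sides are the best constants `c` for two maps `U : L₂(M; X) → L₂(N; Y)` and
`V : L₂(N; Y') → L₂(M; X')` which are adjoint for the pairing `∫ g(f)`: pulling the finite
sums and the functionals through the integrals gives `∫ (V g)(f) dμ = ∫ g(U f) dν`. A bound for
one map bounds the pairing by Cauchy–Schwarz, and the pairing in turn controls the other map,
because the L₂-norm of a function `h` with values in a space `Z` embedded isometrically in a
dual `P'` is normed by L₂-functions with values in `P`. For this, `h` is a.e. separably valued,
so countably many unit vectors `D i` almost norm all of its values; choosing measurably
`d s = D i` with `|⟨h s, d s⟩| ≥ r ‖h s‖` and testing against `f s = conj ⟨h s, d s⟩ • d s`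
gives `r ‖h‖₂ ≤ c`. So the two sets of admissible constants are equal.
-/

open MeasureTheory NormedSpace

section CauchySchwarz

variable {𝕜 α E G : Type*} [RCLike 𝕜] [MeasurableSpace α] {μ : Measure α}
  [NormedAddCommGroup E] [NormedSpace 𝕜 E] [NormedAddCommGroup G] [NormedSpace 𝕜 G]
  {F : α → E →L[𝕜] G} {f : α → E}

lemma integral_mul_le_sqrt_mul_sqrt {φ ψ : α → ℝ} (hφ₀ : 0 ≤ᵐ[μ] φ) (hψ₀ : 0 ≤ᵐ[μ] ψ)
    (hφ : MemLp φ 2 μ) (hψ : MemLp ψ 2 μ) :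
    ∫ s, φ s * ψ s ∂μ ≤ √(∫ s, φ s ^ 2 ∂μ) * √(∫ s, ψ s ^ 2 ∂μ) := by
  have := integral_mul_le_Lp_mul_Lq_of_nonneg Real.HolderConjugate.two_two hφ₀ hψ₀
    (by simpa using hφ) (by simpa using hψ)
  simpa [Real.sqrt_eq_rpow] using this

lemma norm_integral_apply_le [NormedSpace ℝ G] (hF : MemLp F 2 μ) (hf : MemLp f 2 μ) :
    ‖∫ s, F s (f s) ∂μ‖ ≤ √(∫ s, ‖F s‖ ^ 2 ∂μ) * √(∫ s, ‖f s‖ ^ 2 ∂μ) :=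
  calc ‖∫ s, F s (f s) ∂μ‖ ≤ ∫ s, ‖F s‖ * ‖f s‖ ∂μ :=
        norm_integral_le_of_norm_le (hF.norm.integrable_mul hf.norm)
          (.of_forall fun s => (F s).le_opNorm (f s))
    _ ≤ _ := integral_mul_le_sqrt_mul_sqrt (.of_forall fun _ => norm_nonneg _)
          (.of_forall fun _ => norm_nonneg _) hF.norm hf.norm

end CauchySchwarz

lemma Real.sqrt_le_of_le_mul_sqrt {x C : ℝ} (hC : 0 ≤ C) (h : x ≤ C * √x) : √x ≤ C := by
  rcases le_or_gt x 0 with hx | hx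
  · rw [Real.sqrt_eq_zero'.2 hx]; exact hC
  · nlinarith [Real.mul_self_sqrt hx.le, Real.sqrt_pos.2 hx]

section Norming

variable {𝕜 Z P : Type*} [RCLike 𝕜] [NormedAddCommGroup Z] [NormedSpace 𝕜 Z]
  [NormedAddCommGroup P] [NormedSpace 𝕜 P] (j : Z →ₗᵢ[𝕜] P →L[𝕜] 𝕜)

lemma LinearIsometry.norm_apply_apply_le (z : Z) {w : P} (hw : ‖w‖ ≤ 1) : ‖j z w‖ ≤ ‖z‖ := by
  simpa [j.norm_map] using (j z).le_opNorm_of_le hw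

lemma exists_seq_norming_of_isSeparable {s : Set Z} (hs : TopologicalSpace.IsSeparable s) :
    ∃ D : ℕ → P, (∀ i, ‖D i‖ ≤ 1) ∧ ∀ v ∈ s, ∀ r < ‖v‖, ∃ i, r < ‖j v (D i)‖ := by
  obtain ⟨t, htc, hst⟩ := hs
  obtain ⟨e, he⟩ := (htc.insert 0).exists_eq_range (Set.insert_nonempty 0 t)
  have hnorming (z : Z) (m : ℕ) : ∃ w : P, ‖w‖ ≤ 1 ∧ ‖z‖ - 1 / (m + 1) < ‖j z w‖ := by
    have hm : (0 : ℝ) < 1 / (m + 1) := Nat.one_div_pos_of_nat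
    obtain ⟨w, hw, hzw⟩ := (j z).exists_lt_apply_of_lt_opNorm
      (r := ‖z‖ - 1 / (m + 1)) (by rw [j.norm_map]; linarith)
    exact ⟨w, hw.le, hzw⟩
  choose w hw hzw using hnorming
  refine ⟨fun i => w (e i.unpair.1) i.unpair.2, fun i => hw _ _, fun v hv r hr => ?_⟩
  obtain ⟨δ, hδ, rfl⟩ : ∃ δ > 0, r = ‖v‖ - 3 * δ := ⟨(‖v‖ - r) / 3, by linarith, by ring⟩
  have hv' : v ∈ closure (Set.range e) := he ▸ closure_mono (Set.subset_insert 0 t) (hst hv)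
  obtain ⟨_, ⟨q, rfl⟩, hq⟩ := Metric.mem_closure_iff.1 hv' δ hδ
  obtain ⟨m, hm⟩ := exists_nat_one_div_lt hδ
  refine ⟨Nat.pair q m, ?_⟩
  simp only [Nat.unpair_pair]
  have hdiff := j.norm_apply_apply_le (e q - v) (hw (e q) m)
  rw [map_sub, sub_apply] at hdiff
  rw [dist_eq_norm] at hq
  linarith [hzw (e q) m, norm_sub_norm_le (j (e q) (w (e q) m)) (j v (w (e q) m)),
    norm_sub_norm_le v (e q), norm_sub_rev v (e q)]

lemma exists_stronglyMeasurable_norming {α : Type*} [MeasurableSpace α] {h : α → Z}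
    (hh : StronglyMeasurable h) {r : ℝ} (hr : r < 1) :
    ∃ d : α → P, StronglyMeasurable d ∧ ∀ s, ‖d s‖ ≤ 1 ∧ r * ‖h s‖ ≤ ‖j (h s) (d s)‖ := by
  classical
  obtain ⟨D, hD, hDnorming⟩ := exists_seq_norming_of_isSeparable j hh.isSeparable_range
  have hex (s : α) : ∃ i, r * ‖h s‖ ≤ ‖j (h s) (D i)‖ := by
    rcases (norm_nonneg (h s)).eq_or_lt with hs | hs
    · exact ⟨0, by rw [← hs, mul_zero]; exact norm_nonneg _⟩
    · obtain ⟨i, hi⟩ := hDnorming (h s) ⟨s, rfl⟩ (r * ‖h s‖) (by nlinarith)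
      exact ⟨i, hi.le⟩
  have hK : Measurable fun s => Nat.find (hex s) := by
    refine measurable_find hex fun i => measurableSet_le (hh.norm.measurable.const_mul r) ?_
    exact ((ContinuousLinearMap.apply 𝕜 𝕜 (D i)).continuous.comp j.continuous
      |>.comp_stronglyMeasurable hh).measurable.norm
  exact ⟨fun s => D (Nat.find (hex s)), StronglyMeasurable.of_discrete.comp_measurable hK,
    fun s => ⟨hD _, Nat.find_spec (hex s)⟩⟩

variable {α : Type*} [MeasurableSpace α] {μ : Measure α}

lemma sqrt_integral_norm_sq_le_of_norm_integral_apply_le {h : α → Z} (hh : MemLp h 2 μ)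
    {C : ℝ} (hC : 0 ≤ C)
    (hpair : ∀ f : α → P, MemLp f 2 μ → ‖∫ s, j (h s) (f s) ∂μ‖ ≤ C * √(∫ s, ‖f s‖ ^ 2 ∂μ)) :
    √(∫ s, ‖h s‖ ^ 2 ∂μ) ≤ C := by
  set h' := hh.1.mk h
  have hh' : MemLp h' 2 μ := hh.ae_eq hh.1.ae_eq_mk
  have hh_ae : h =ᵐ[μ] h' := hh.1.ae_eq_mk
  rw [integral_congr_ae (hh_ae.mono fun s hs => by rw [hs])]
  refine le_of_forall_lt_imp_le_of_dense fun x hx => ?_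
  rcases le_or_gt x 0 with hx0 | hx0
  · exact hx0.trans hC
  have hI : 0 < √(∫ s, ‖h' s‖ ^ 2 ∂μ) := hx0.trans hx
  set r := x / √(∫ s, ‖h' s‖ ^ 2 ∂μ)
  obtain ⟨d, hd, hd_norm⟩ := exists_stronglyMeasurable_norming j hh.1.stronglyMeasurable_mk
    (r := r) ((div_lt_one hI).2 hx)
  set v := fun s => j (h' s) (d s)
  set f := fun s => starRingEnd 𝕜 (v s) • d s
  have hv_le (s : α) : ‖v s‖ ≤ ‖h' s‖ := j.norm_apply_apply_le _ (hd_norm s).1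
  have hf_le (s : α) : ‖f s‖ ≤ ‖v s‖ := by
    simpa [f, norm_smul] using mul_le_of_le_one_right (norm_nonneg (v s)) (hd_norm s).1
  have hv : MemLp v 2 μ := hh'.of_le (j.toContinuousLinearMap.aestronglyMeasurable_comp₂
    hh'.1 hd.aestronglyMeasurable) (.of_forall fun s => by simpa using hv_le s)
  have hf : MemLp f 2 μ := hv.of_le ((RCLike.continuous_conj.comp_aestronglyMeasurable hv.1).smul
    hd.aestronglyMeasurable) (.of_forall fun s => by simpa using hf_le s)
  have hvf (s : α) : j (h' s) (f s) = ((‖v s‖ ^ 2 : ℝ) : 𝕜) := by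
    simp [f, v, RCLike.conj_mul]
  set J := ∫ s, ‖v s‖ ^ 2 ∂μ
  have hJ : ‖∫ s, j (h s) (f s) ∂μ‖ = J := by
    rw [integral_congr_ae (hh_ae.mono fun s hs => by rw [hs, hvf]), integral_ofReal,
      RCLike.norm_ofReal, abs_of_nonneg (integral_nonneg fun s => sq_nonneg _)]
  have hfJ : ∫ s, ‖f s‖ ^ 2 ∂μ ≤ J := integral_mono hf.norm.integrable_sq hv.norm.integrable_sq
    fun s => pow_le_pow_left₀ (norm_nonneg _) (hf_le s) 2
  have hJC : √J ≤ C := Real.sqrt_le_of_le_mul_sqrt hC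
    ((hJ ▸ hpair f hf).trans (by gcongr))
  have hIJ : (∫ s, ‖h' s‖ ^ 2 ∂μ) * r ^ 2 ≤ J := by
    rw [← integral_mul_const]
    refine integral_mono (hh'.norm.integrable_sq.mul_const _) hv.norm.integrable_sq fun s => ?_
    have hr0 : 0 ≤ r * ‖h' s‖ := mul_nonneg (div_nonneg hx0.le hI.le) (norm_nonneg _)
    simpa [mul_pow, mul_comm] using pow_le_pow_left₀ hr0 (hd_norm s).2 2
  calc x = √((∫ s, ‖h' s‖ ^ 2 ∂μ) * r ^ 2) := by
        rw [Real.sqrt_mul' _ (sq_nonneg r), Real.sqrt_sq (div_nonneg hx0.le hI.le),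
          mul_div_cancel₀ _ hI.ne']
    _ ≤ √J := Real.sqrt_le_sqrt hIJ
    _ ≤ C := hJC

end Norming

section Duality

variable {𝕜 α β E F : Type*} [RCLike 𝕜] [MeasurableSpace α] [MeasurableSpace β]
  {μ : Measure α} {ν : Measure β}
  [NormedAddCommGroup E] [NormedSpace 𝕜 E] [NormedAddCommGroup F] [NormedSpace 𝕜 F]

lemma setOf_bound_eq_setOf_bound_of_integral_apply_eq (U : (α → E) → β → F)
    (V : (β → StrongDual 𝕜 F) → α → StrongDual 𝕜 E)
    (hU : ∀ f, MemLp f 2 μ → MemLp (U f) 2 ν) (hV : ∀ g, MemLp g 2 ν → MemLp (V g) 2 μ)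
    (hUV : ∀ f g, MemLp f 2 μ → MemLp g 2 ν → ∫ s, V g s (f s) ∂μ = ∫ t, g t (U f t) ∂ν) :
    {c : ℝ | 0 ≤ c ∧ ∀ g, MemLp g 2 ν → √(∫ s, ‖V g s‖ ^ 2 ∂μ) ≤ c * √(∫ t, ‖g t‖ ^ 2 ∂ν)} =
      {c : ℝ | 0 ≤ c ∧ ∀ f, MemLp f 2 μ → √(∫ t, ‖U f t‖ ^ 2 ∂ν) ≤ c * √(∫ s, ‖f s‖ ^ 2 ∂μ)} := by
  refine Set.ext fun c => and_congr_right fun hc => ⟨fun hVc f hf => ?_, fun hUc g hg => ?_⟩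
  · refine sqrt_integral_norm_sq_le_of_norm_integral_apply_le (inclusionInDoubleDualLi 𝕜)
      (hU f hf) (by positivity) fun g hg => ?_
    calc ‖∫ t, g t (U f t) ∂ν‖ = ‖∫ s, V g s (f s) ∂μ‖ := by rw [hUV f g hf hg]
      _ ≤ √(∫ s, ‖V g s‖ ^ 2 ∂μ) * √(∫ s, ‖f s‖ ^ 2 ∂μ) := norm_integral_apply_le (hV g hg) hf
      _ ≤ c * √(∫ t, ‖g t‖ ^ 2 ∂ν) * √(∫ s, ‖f s‖ ^ 2 ∂μ) := by gcongr; exact hVc g hg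
      _ = c * √(∫ s, ‖f s‖ ^ 2 ∂μ) * √(∫ t, ‖g t‖ ^ 2 ∂ν) := by ring
  · refine sqrt_integral_norm_sq_le_of_norm_integral_apply_le LinearIsometry.id
      (hV g hg) (by positivity) fun f hf => ?_
    calc ‖∫ s, V g s (f s) ∂μ‖ = ‖∫ t, g t (U f t) ∂ν‖ := by rw [hUV f g hf hg]
      _ ≤ √(∫ t, ‖g t‖ ^ 2 ∂ν) * √(∫ t, ‖U f t‖ ^ 2 ∂ν) := norm_integral_apply_le hg (hU f hf)
      _ ≤ √(∫ t, ‖g t‖ ^ 2 ∂ν) * (c * √(∫ s, ‖f s‖ ^ 2 ∂μ)) := by gcongr; exact hUc f hf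
      _ = c * √(∫ t, ‖g t‖ ^ 2 ∂ν) * √(∫ s, ‖f s‖ ^ 2 ∂μ) := by ring

end Duality

lemma MeasureTheory.MemLp.conj {𝕜 α : Type*} [RCLike 𝕜] [MeasurableSpace α] {μ : Measure α}
    {p : ENNReal} {f : α → 𝕜} (hf : MemLp f p μ) : MemLp (fun s => starRingEnd 𝕜 (f s)) p μ :=
  hf.star

section FiniteRank

variable {α E ι : Type*} [MeasurableSpace α] {μ : Measure α}
  [NormedAddCommGroup E] [NormedSpace ℂ E] [Fintype ι] {c : ι → α → ℂ}

lemma memLp_sum_smul_const {p : ENNReal} (hc : ∀ k, MemLp (c k) p μ) (v : ι → E) :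
    MemLp (fun s => ∑ k, c k s • v k) p μ :=
  memLp_finsetSum _ fun k _ => (memLp_top_const (v k)).smul (hc k)

lemma integral_sum_smul_apply [CompleteSpace E] (hc : ∀ k, MemLp (c k) 2 μ) {f : α → E}
    (hf : MemLp f 2 μ) (φ : ι → StrongDual ℂ E) :
    ∫ s, (∑ k, c k s • φ k) (f s) ∂μ = ∑ k, φ k (∫ s, c k s • f s ∂μ) := by
  have hint (k : ι) : Integrable (fun s => c k s • f s) μ :=
    memLp_one_iff_integrable.mp (hf.smul (hc k))
  calc ∫ s, (∑ k, c k s • φ k) (f s) ∂μ = ∫ s, ∑ k, φ k (c k s • f s) ∂μ := by simp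
    _ = ∑ k, φ k (∫ s, c k s • f s ∂μ) := by
      rw [integral_finsetSum _ fun k _ => (φ k).integrable_comp (hint k)]
      exact Finset.sum_congr rfl fun k _ => (φ k).integral_comp_comm (hint k)

lemma integral_apply_sum_smul (hc : ∀ k, MemLp (c k) 2 μ) {g : α → StrongDual ℂ E}
    (hg : MemLp g 2 μ) (w : ι → E) :
    ∫ s, g s (∑ k, c k s • w k) ∂μ = ∑ k, (∫ s, c k s • g s ∂μ) (w k) := by
  have hint (k : ι) : Integrable (fun s => c k s • g s) μ :=
    memLp_one_iff_integrable.mp (hg.smul (hc k))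
  calc ∫ s, g s (∑ k, c k s • w k) ∂μ
      = ∫ s, ∑ k, ContinuousLinearMap.apply ℂ ℂ (w k) (c k s • g s) ∂μ := by simp
    _ = ∑ k, (∫ s, c k s • g s ∂μ) (w k) := by
      rw [integral_finsetSum _ fun k _ => (ContinuousLinearMap.apply ℂ ℂ (w k)).integrable_comp
        (hint k)]
      exact Finset.sum_congr rfl fun k _ =>
        (ContinuousLinearMap.apply ℂ ℂ (w k)).integral_comp_comm (hint k)

variable {β X Y : Type*} [MeasurableSpace β] {ν : Measure β}
  [NormedAddCommGroup X] [NormedSpace ℂ X] [CompleteSpace X] [NormedAddCommGroup Y]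
  [NormedSpace ℂ Y]

lemma integral_dual_apply_eq_integral_apply_primal {a : ι → α → ℂ} {b : ι → β → ℂ}
    (ha : ∀ k, MemLp (a k) 2 μ) (hb : ∀ k, MemLp (b k) 2 ν) (T : X →L[ℂ] Y) {f : α → X}
    (hf : MemLp f 2 μ) {g : β → StrongDual ℂ Y} (hg : MemLp g 2 ν) :
    ∫ s, (∑ k, starRingEnd ℂ (a k s) • ((∫ t, b k t • g t ∂ν).comp T)) (f s) ∂μ =
      ∫ t, g t (∑ k, b k t • T (∫ s, starRingEnd ℂ (a k s) • f s ∂μ)) ∂ν := by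
  rw [integral_sum_smul_apply (fun k => (ha k).conj) hf, integral_apply_sum_smul hb hg]
  rfl

end FiniteRank

theorem stmt14_general {X Y : Type*} [NormedAddCommGroup X] [NormedSpace ℂ X] [CompleteSpace X]
    [NormedAddCommGroup Y] [NormedSpace ℂ Y]
    {M N : Type*} [MeasurableSpace M] [MeasurableSpace N]
    (μ : Measure M) (ν : Measure N)
    {n : ℕ} (a : Fin n → M → ℂ) (b : Fin n → N → ℂ)
    (ha : ∀ i, MemLp (a i) 2 μ) (hb : ∀ i, MemLp (b i) 2 ν)
    (T : X →L[ℂ] Y) :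
    sInf {c : ℝ | 0 ≤ c ∧ ∀ g : N → StrongDual ℂ Y, MemLp g 2 ν →
        Real.sqrt (∫ s, ‖∑ k, (starRingEnd ℂ) (a k s) •
            ((∫ t, b k t • g t ∂ν).comp T)‖ ^ 2 ∂μ) ≤
          c * Real.sqrt (∫ t, ‖g t‖ ^ 2 ∂ν)} ≤
      sInf {c : ℝ | 0 ≤ c ∧ ∀ f : M → X, MemLp f 2 μ →
        Real.sqrt (∫ t, ‖∑ k, b k t •
            T (∫ s, (starRingEnd ℂ) (a k s) • f s ∂μ)‖ ^ 2 ∂ν) ≤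
          c * Real.sqrt (∫ s, ‖f s‖ ^ 2 ∂μ)} ∧
    sInf {c : ℝ | 0 ≤ c ∧ ∀ g : N → StrongDual ℂ Y, MemLp g 2 ν →
        Real.sqrt (∫ s, ‖∑ k, (starRingEnd ℂ) (a k s) •
            ((∫ t, b k t • g t ∂ν).comp T)‖ ^ 2 ∂μ) ≤
          c * Real.sqrt (∫ t, ‖g t‖ ^ 2 ∂ν)} =
      sInf {c : ℝ | 0 ≤ c ∧ ∀ f : M → X, MemLp f 2 μ →
        Real.sqrt (∫ t, ‖∑ k, b k t •
            T (∫ s, (starRingEnd ℂ) (a k s) • f s ∂μ)‖ ^ 2 ∂ν) ≤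
          c * Real.sqrt (∫ s, ‖f s‖ ^ 2 ∂μ)} := by
  have hsets := setOf_bound_eq_setOf_bound_of_integral_apply_eq
    (fun f t => ∑ k, b k t • T (∫ s, starRingEnd ℂ (a k s) • f s ∂μ))
    (fun g s => ∑ k, starRingEnd ℂ (a k s) • ((∫ t, b k t • g t ∂ν).comp T))
    (fun f _ => memLp_sum_smul_const hb _)
    (fun g _ => memLp_sum_smul_const (fun k => (ha k).conj) _)
    (fun f g hf hg => integral_dual_apply_eq_integral_apply_primal ha hb T hf hg)
  exact ⟨(congrArg sInf hsets).le, congrArg sInf hsets⟩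

/-- Duality: `δ(T' | conj 𝒜_n, conj ℬ_n) ≤ δ(T | ℬ_n, 𝒜_n)`, and in fact equality holds.
Here the `δ`-ideal norms are realized as infima of the sets of admissible constants, and
the dual operator `T' : Y' → X'` acts by `g ↦ g ∘ T`. -/
theorem stmt14 {X Y : Type*} [NormedAddCommGroup X] [NormedSpace ℂ X] [CompleteSpace X]
    [NormedAddCommGroup Y] [NormedSpace ℂ Y] [CompleteSpace Y]
    {M N : Type*} [MeasurableSpace M] [MeasurableSpace N]
    (μ : Measure M) (ν : Measure N)
    {n : ℕ} (a : Fin n → M → ℂ) (b : Fin n → N → ℂ)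
    (ha : ∀ i, MemLp (a i) 2 μ) (hb : ∀ i, MemLp (b i) 2 ν)
    (horth_a : ∀ i j, ∫ s, a i s * (starRingEnd ℂ) (a j s) ∂μ = if i = j then 1 else 0)
    (horth_b : ∀ i j, ∫ t, b i t * (starRingEnd ℂ) (b j t) ∂ν = if i = j then 1 else 0)
    (T : X →L[ℂ] Y) :
    sInf {c : ℝ | 0 ≤ c ∧ ∀ g : N → StrongDual ℂ Y, MemLp g 2 ν →
        Real.sqrt (∫ s, ‖∑ k, (starRingEnd ℂ) (a k s) •
            ((∫ t, b k t • g t ∂ν).comp T)‖ ^ 2 ∂μ) ≤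
          c * Real.sqrt (∫ t, ‖g t‖ ^ 2 ∂ν)} ≤
      sInf {c : ℝ | 0 ≤ c ∧ ∀ f : M → X, MemLp f 2 μ →
        Real.sqrt (∫ t, ‖∑ k, b k t •
            T (∫ s, (starRingEnd ℂ) (a k s) • f s ∂μ)‖ ^ 2 ∂ν) ≤
          c * Real.sqrt (∫ s, ‖f s‖ ^ 2 ∂μ)} ∧
    sInf {c : ℝ | 0 ≤ c ∧ ∀ g : N → StrongDual ℂ Y, MemLp g 2 ν →
        Real.sqrt (∫ s, ‖∑ k, (starRingEnd ℂ) (a k s) •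
            ((∫ t, b k t • g t ∂ν).comp T)‖ ^ 2 ∂μ) ≤
          c * Real.sqrt (∫ t, ‖g t‖ ^ 2 ∂ν)} =
      sInf {c : ℝ | 0 ≤ c ∧ ∀ f : M → X, MemLp f 2 μ →
        Real.sqrt (∫ t, ‖∑ k, b k t •
            T (∫ s, (starRingEnd ℂ) (a k s) • f s ∂μ)‖ ^ 2 ∂ν) ≤
          c * Real.sqrt (∫ s, ‖f s‖ ^ 2 ∂μ)} :=
  stmt14_general μ ν a b ha hb T
end
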